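/- arXiv:2208.04344 — 3 statements merged into one kernel-verified Lean document; each statement's English description precedes it below -/
import Mathlib

section
/- Suppose L : (C, ⊥_C) → (E, ⊥_E) is an orthogonal functor admitting a fully faithful orthogonal right adjoint j : (E, ⊥_E) → (C, ⊥_C). Then ⊥_E equals the pushforward orthogonality relation L_*(⊥_C). In particular, together with the fact that the underlying functor L is a reflective localization of C at W := L⁻¹(Iso E), the functor L is a reflective localization of orthogonal categories at W. -/
/-! Orthogonality of functors is invariant under natural isomorphism, by composition
stability. Since the counit gives `j ⋙ L ≅ 𝟭`, every functor `G` out of `E` is isomorphic to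
`j ⋙ (L ⋙ G)`, so `G` is orthogonal as soon as `L ⋙ G` is (`j` being orthogonal). For
`G = 𝟭` this is the minimality of `⊥_E`; for the lift of an orthogonal functor through the
reflective localization `L` it gives the orthogonal factorization, while uniqueness of
factorizations is already part of `L` being a localization. -/

open CategoryTheory

universe w v u v₁ u₁ v₂ u₂ v₃ u₃

structure Orthogonality (C : Type u) [Category.{v} C] where
  rel : ∀ {M₁ M₂ N : C}, (M₁ ⟶ N) → (M₂ ⟶ N) → Prop
  symm : ∀ {M₁ M₂ N : C} {f₁ : M₁ ⟶ N} {f₂ : M₂ ⟶ N}, rel f₁ f₂ → rel f₂ f₁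
  comp_stable : ∀ {M₁ M₂ N N' K₁ K₂ : C} {f₁ : M₁ ⟶ N} {f₂ : M₂ ⟶ N}
      (g : N ⟶ N') (h₁ : K₁ ⟶ M₁) (h₂ : K₂ ⟶ M₂),
      rel f₁ f₂ → rel (h₁ ≫ f₁ ≫ g) (h₂ ≫ f₂ ≫ g)

def IsOrthogonalFunctor {C : Type u₁} [Category.{v₁} C] {D : Type u₂} [Category.{v₂} D]
    (pC : Orthogonality C) (pD : Orthogonality D) (F : C ⥤ D) : Prop :=
  ∀ {M₁ M₂ N : C} (f₁ : M₁ ⟶ N) (f₂ : M₂ ⟶ N),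
    pC.rel f₁ f₂ → pD.rel (F.map f₁) (F.map f₂)

/-- A functor sends a class of morphisms to isomorphisms. -/
def SendsToIso {C : Type u₁} [Category.{v₁} C] {D : Type u₂} [Category.{v₂} D]
    (F : C ⥤ D) (W : MorphismProperty C) : Prop :=
  ∀ ⦃X Y : C⦄ (f : X ⟶ Y), W f → IsIso (F.map f)

/-- The universal property of a localization of categories: (i) `L` sends `W` to
isomorphisms; (ii) every functor sending `W` to isomorphisms factors through `L`
up to natural isomorphism; (iii) whiskering with `L` is bijective on natural
transformations. -/
def IsLocalizationUP {C : Type u₁} [Category.{v₁} C] {E : Type u₂} [Category.{v₂} E]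
    (L : C ⥤ E) (W : MorphismProperty C) : Prop :=
  SendsToIso L W ∧
  (∀ {D : Type u₃} [Category.{v₃} D] (F : C ⥤ D), SendsToIso F W →
    ∃ F_W : E ⥤ D, Nonempty (L ⋙ F_W ≅ F)) ∧
  (∀ {D : Type u₃} [Category.{v₃} D] (G H : E ⥤ D),
    Function.Bijective fun α : G ⟶ H => Functor.whiskerLeft L α)

/-- The universal property of a localization of *orthogonal* categories. -/
def IsOrthLocalizationUP {C : Type u₁} [Category.{v₁} C] {E : Type u₂} [Category.{v₂} E]
    (pC : Orthogonality C) (pE : Orthogonality E) (L : C ⥤ E)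
    (W : MorphismProperty C) : Prop :=
  IsOrthogonalFunctor pC pE L ∧
  SendsToIso L W ∧
  (∀ {D : Type u₃} [Category.{v₃} D] (pD : Orthogonality D) (F : C ⥤ D),
    IsOrthogonalFunctor pC pD F → SendsToIso F W →
    ∃ F_W : E ⥤ D, IsOrthogonalFunctor pE pD F_W ∧ Nonempty (L ⋙ F_W ≅ F)) ∧
  (∀ {D : Type u₃} [Category.{v₃} D] (pD : Orthogonality D) (G H : E ⥤ D),
    IsOrthogonalFunctor pE pD G → IsOrthogonalFunctor pE pD H →
    Function.Bijective fun α : G ⟶ H => Functor.whiskerLeft L α)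

namespace IsOrthogonalFunctor

variable {C : Type u₁} [Category.{v₁} C] {D : Type u₂} [Category.{v₂} D]
  {E : Type u₃} [Category.{v₃} E] {pC : Orthogonality C} {pD : Orthogonality D}
  {pE : Orthogonality E}

theorem comp {F : C ⥤ D} {G : D ⥤ E} (hF : IsOrthogonalFunctor pC pD F)
    (hG : IsOrthogonalFunctor pD pE G) : IsOrthogonalFunctor pC pE (F ⋙ G) :=
  fun f₁ f₂ h => hG _ _ (hF f₁ f₂ h)

theorem of_iso {F G : C ⥤ D} (hF : IsOrthogonalFunctor pC pD F) (e : F ≅ G) :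
    IsOrthogonalFunctor pC pD G := by
  intro M₁ M₂ N f₁ f₂ h
  have hconj := pD.comp_stable (e.hom.app N) (e.inv.app M₁) (e.inv.app M₂) (hF f₁ f₂ h)
  rwa [NatIso.naturality_1, NatIso.naturality_1] at hconj

theorem of_comp_of_section {L : C ⥤ E} {j : E ⥤ C} (hj : IsOrthogonalFunctor pE pC j)
    (e : j ⋙ L ≅ 𝟭 E) {G : E ⥤ D} (hLG : IsOrthogonalFunctor pC pD (L ⋙ G)) :
    IsOrthogonalFunctor pE pD G :=
  of_iso (comp hj hLG) ((Functor.associator j L G).symm ≪≫ Functor.isoWhiskerRight e G ≪≫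
    G.leftUnitor)

end IsOrthogonalFunctor

/-- if an orthogonal functor `L` admits a fully faithful orthogonal right
adjoint `j`, then `⊥_E` equals the pushforward orthogonality relation `L_*(⊥_C)` (i.e.
it is minimal among orthogonality relations making `L` orthogonal); in particular `L` is
a reflective localization of orthogonal categories at `W := L⁻¹(Iso E)`. -/
theorem reflective_orthogonal_localization {C : Type u₁} [Category.{v₁} C]
    {E : Type u₂} [Category.{v₂} E] (pC : Orthogonality C) (pE : Orthogonality E)
    (L : C ⥤ E) (j : E ⥤ C)
    (hL : IsOrthogonalFunctor pC pE L) (hj : IsOrthogonalFunctor pE pC j)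
    [j.Full] [j.Faithful] (adj : L ⊣ j) :
    (∀ q : Orthogonality E, IsOrthogonalFunctor pC q L →
      ∀ {M₁ M₂ N : E} (g₁ : M₁ ⟶ N) (g₂ : M₂ ⟶ N), pE.rel g₁ g₂ → q.rel g₁ g₂) ∧
    IsOrthLocalizationUP pC pE L (fun _ _ f => IsIso (L.map f)) := by
  have e : j ⋙ L ≅ 𝟭 E := asIso adj.counit
  let W := (MorphismProperty.isomorphisms E).inverseImage L
  have : L.IsLocalization W := adj.isLocalization
  refine ⟨fun q hq _ _ _ => IsOrthogonalFunctor.of_comp_of_section (G := 𝟭 E) hj e hq, hL,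
    fun _ _ _ hf => hf, ?_, ?_⟩
  · intro D _ pD F hF (hFW : W.IsInvertedBy F)
    have fac := Localization.fac F hFW L
    exact ⟨Localization.lift F hFW L,
      IsOrthogonalFunctor.of_comp_of_section hj e (IsOrthogonalFunctor.of_iso hF fac.symm), ⟨fac⟩⟩
  · intro D _ pD G H _ _
    exact (Localization.fullyFaithfulWhiskeringLeft L W D).map_bijective G H
end

section
/- The functor L : Loc₁^skl → Bℝ (sending every interval to the unique object * and every translation f_ξ to ξ) exhibits Bℝ as the localization of Loc₁^skl at the set of all its morphisms: L sends every morphism to an isomorphism; every functor F : Loc₁^skl → D sending all morphisms to isomorphisms factors through L up to natural isomorphism; and whiskering with L is bijective on natural transformations between functors out of Bℝ. -/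
section UP
universe v₁ u₁ v₂ u₂ v₃ u₃

open CategoryTheory

/-- The skeletal category `Loc₁^skl`: objects are open intervals `(a, b) ⊆ ℝ` with
`-∞ ≤ a < b ≤ +∞` (encoded by their extended-real endpoints). -/
structure OInterval : Type where
  a : EReal
  b : EReal
  hab : a < b

/-- Morphisms `(a,b) → (a',b')` are translations by `ξ ∈ ℝ` carrying `(a,b)` into
`(a',b')`, i.e. with `a' ≤ a + ξ` and `b + ξ ≤ b'` in the extended reals
(equivalently `a' - a ≤ ξ ≤ b' - b`); composition is addition of the `ξ`'s. -/
instance : Category OInterval where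
  Hom I J := {ξ : ℝ // J.a ≤ I.a + (ξ : EReal) ∧ I.b + (ξ : EReal) ≤ J.b}
  id I := ⟨0, by simp⟩
  comp {I J K} f g := ⟨f.1 + g.1, by
    constructor
    · calc K.a ≤ J.a + (g.1 : EReal) := g.2.1
        _ ≤ (I.a + (f.1 : EReal)) + (g.1 : EReal) := by
            exact add_le_add f.2.1 le_rfl
        _ = I.a + ((f.1 + g.1 : ℝ) : EReal) := by
            rw [EReal.coe_add, add_assoc]
    · calc I.b + ((f.1 + g.1 : ℝ) : EReal) = (I.b + (f.1 : EReal)) + (g.1 : EReal) := by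
            rw [EReal.coe_add, add_assoc]
        _ ≤ J.b + (g.1 : EReal) := add_le_add f.2.2 le_rfl
        _ ≤ K.b := g.2.2⟩
  id_comp f := by apply Subtype.ext; simp
  comp_id f := by apply Subtype.ext; simp
  assoc f g h := by apply Subtype.ext; exact add_assoc _ _ _

/-- The object `ℝ = (-∞, +∞)`. -/
noncomputable def Rline : OInterval := ⟨⊥, ⊤, bot_lt_top⟩

/-- The fully faithful functor `j : Bℝ → Loc₁^skl` sending the unique object to
`ℝ = (-∞,+∞)` and `ξ ∈ ℝ` to the translation `f_ξ : ℝ → ℝ`. -/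
noncomputable def jLine : SingleObj (Multiplicative ℝ) ⥤ OInterval where
  obj _ := Rline
  map ξ := ⟨Multiplicative.toAdd ξ, by
    constructor
    · simp [Rline]
    · simp [Rline]⟩
  map_id _ := by apply Subtype.ext; rfl
  map_comp f g := by
    apply Subtype.ext
    exact add_comm (Multiplicative.toAdd g) (Multiplicative.toAdd f)

/-- The functor `L : Loc₁^skl → Bℝ` sending every interval to `*` and the
translation `f_ξ` to `ξ`. -/
def LLine : OInterval ⥤ SingleObj (Multiplicative ℝ) where
  obj _ := SingleObj.star _
  map f := Multiplicative.ofAdd f.1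
  map_id _ := rfl
  map_comp f g := by
    exact congrArg Multiplicative.ofAdd (add_comm f.1 g.1)

end UP

/-! Translation by `0` into `ℝ = (-∞, +∞)` is the unit of an adjunction `L ⊣ j` whose right
adjoint `j` is fully faithful, so `L` is a localization at the morphisms it inverts; these are
all morphisms, because `Bℝ` is a groupoid. -/

open CategoryTheory

theorem isLocalizationUP_of_isLocalization {C : Type*} [Category* C] {D : Type*} [Category* D]
    (L : C ⥤ D) (W : MorphismProperty C) [L.IsLocalization W] : IsLocalizationUP L W :=
  ⟨Localization.inverts L W,
    fun F hF => ⟨Localization.lift F hF L, ⟨Localization.fac F hF L⟩⟩,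
    fun G H => (Localization.fullyFaithfulWhiskeringLeft L W _).map_bijective G H⟩

theorem MorphismProperty.inverseImage_isomorphisms_eq_top {C : Type*} [Category* C]
    {E : Type*} [Category* E] [IsGroupoid E] (F : C ⥤ E) :
    (MorphismProperty.isomorphisms E).inverseImage F = ⊤ := by
  rw [(isGroupoid_iff_isomorphisms_eq_top E).1 inferInstance]
  rfl

def OInterval.toRline (I : OInterval) : I ⟶ Rline := ⟨0, by simp [Rline]⟩

noncomputable def jLineFullyFaithful : jLine.FullyFaithful where
  preimage f := Multiplicative.ofAdd f.1

noncomputable def lLineAdjJLine : LLine ⊣ jLine where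
  unit := { app := OInterval.toRline, naturality := fun _ _ f => Subtype.ext (add_comm f.1 0) }
  counit := 𝟙 _
  left_triangle_components _ := mul_one _
  right_triangle_components _ := Subtype.ext (zero_add _)

/-- `L : Loc₁^skl → Bℝ` exhibits `Bℝ` as the localization of
`Loc₁^skl` at the set of all of its morphisms. -/
theorem LLine_is_localization : IsLocalizationUP LLine ⊤ := by
  have := jLineFullyFaithful.full
  have := jLineFullyFaithful.faithful
  have := lLineAdjJLine.isLocalization
  rw [MorphismProperty.inverseImage_isomorphisms_eq_top] at this
  exact isLocalizationUP_of_isLocalization LLine ⊤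
end

section
/- Let C be the relative Cauchy evolution category: objects M, M₋, M₊, M_h; non-identity generating morphisms i₋ : M₋ → M, i₊ : M₊ → M, j₋ : M₋ → M_h, j₊ : M₊ → M_h (with no relations, C being the free category on this zig-zag diagram • ← • → •, • ← • → • arranged as M ← M₊ → M_h and M ← M₋ → M_h). Let Bℤ be the one-object groupoid with morphism group ℤ. Then the functor L : C → Bℤ sending all four objects to *, sending i₋ to 1 ∈ ℤ, and sending j₋, j₊, i₊ to 0 ∈ ℤ, exhibits Bℤ as the localization of C at the set W of all morphisms of C. -/
open CategoryTheory

universe v₁ u₁ v₂ u₂ v₃ u₃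

/-- The objects of the relative Cauchy evolution category: `M`, `M₋`, `M₊`, `M_h`. -/
inductive RObj : Type | M | Mm | Mp | Mh

/-- The generating arrows: `i₊ : M₊ → M`, `i₋ : M₋ → M`, `j₊ : M₊ → M_h`,
`j₋ : M₋ → M_h`. -/
inductive RHom : RObj → RObj → Type
  | ip : RHom .Mp .M
  | im : RHom .Mm .M
  | jp : RHom .Mp .Mh
  | jm : RHom .Mm .Mh

instance : Quiver RObj := ⟨RHom⟩

/-- The prefunctor defining `L : C → Bℤ`: all objects to `*`, `i₋ ↦ 1` and
`i₊, j₊, j₋ ↦ 0`. -/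
def RPhi : RObj ⥤q SingleObj (Multiplicative ℤ) where
  obj _ := SingleObj.star _
  map f := match f with
    | .im => Multiplicative.ofAdd 1
    | .ip => 1
    | .jp => 1
    | .jm => 1

/-- The relative Cauchy evolution category: the free category on the quiver `RObj`. -/
abbrev RCE := Paths RObj

/-- The comparison functor `L : C → Bℤ`. -/
def LRCE : RCE ⥤ SingleObj (Multiplicative ℤ) := Paths.lift RPhi

/-!
Transporting along the spanning tree `i₊`, `j₊`, `j₋` of the quiver identifies every object with
`M`, so a functor from `C` to a groupoid is determined up to isomorphism by where it sends the loop
`i₋ ∘ j₋⁻¹ ∘ j₊ ∘ i₊⁻¹` at `M`. Applied to the free groupoid of `C`, which is the localization of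
`C` at all morphisms, this gives an inverse to the functor from the free groupoid to `Bℤ` induced
by `L`, because `L` sends that loop to the generator `1`.
-/

theorem CategoryTheory.Functor.IsLocalization.isLocalizationUP {C : Type u₁} [Category.{v₁} C]
    {E : Type u₂} [Category.{v₂} E] (L : C ⥤ E) (W : MorphismProperty C) [L.IsLocalization W] :
    IsLocalizationUP.{v₁, u₁, v₂, u₂, v₃, u₃} L W :=
  ⟨Localization.inverts L W, fun F hF => ⟨Localization.lift F hF L, ⟨Localization.fac F hF L⟩⟩,
    fun G H => (Functor.FullyFaithful.ofFullyFaithful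
      (Localization.whiskeringLeftFunctor' L W _)).map_bijective G H⟩

theorem CategoryTheory.SingleObj.functor_ext_ofAdd_one {N : Type u₁} [Monoid N]
    {G H : SingleObj (Multiplicative ℤ) ⥤ SingleObj N}
    (h : G.map (X := star _) (Y := star _) (.ofAdd 1) =
      H.map (X := star _) (Y := star _) (.ofAdd 1)) :
    G = H :=
  (SingleObj.mapHom _ _).symm.injective (MonoidHom.ext_mint h)

noncomputable section

namespace RCE

lemma LRCE_map_of {X Y : RObj} (e : RHom X Y) : LRCE.map ((Paths.of RObj).map e) = RPhi.map e :=
  Paths.lift_toPath _ _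

section

variable {D : Type u₂} [Groupoid.{v₂} D] (F : RCE ⥤ D)

def loop : End (F.obj ((Paths.of RObj).obj .M)) :=
  inv (F.map ((Paths.of RObj).map .ip)) ≫ F.map ((Paths.of RObj).map .jp) ≫
    inv (F.map ((Paths.of RObj).map .jm)) ≫ F.map ((Paths.of RObj).map .im)

/-- Reducible, so that `simp` sees `(loopFunctor F).obj _` as `F.obj M` when matching morphisms. -/
@[simps]
abbrev loopFunctor : SingleObj (Multiplicative ℤ) ⥤ D where
  obj _ := F.obj ((Paths.of RObj).obj .M)
  map n := loop F ^ n.toAdd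
  map_id _ := zpow_zero (loop F)
  map_comp m n := by
    rw [SingleObj.comp_as_mul, toAdd_mul, zpow_add]
    rfl

def treeIso : (X : RObj) → F.obj ((Paths.of RObj).obj .M) ≅ F.obj ((Paths.of RObj).obj X)
  | .M => Iso.refl _
  | .Mp => (asIso (F.map ((Paths.of RObj).map .ip))).symm
  | .Mh => (asIso (F.map ((Paths.of RObj).map .ip))).symm ≪≫
      asIso (F.map ((Paths.of RObj).map .jp))
  | .Mm => (asIso (F.map ((Paths.of RObj).map .ip))).symm ≪≫
      asIso (F.map ((Paths.of RObj).map .jp)) ≪≫ (asIso (F.map ((Paths.of RObj).map .jm))).symm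

lemma treeIso_naturality {X Y : RObj} (e : RHom X Y) :
    (loopFunctor F).map (LRCE.map ((Paths.of RObj).map e)) ≫ (treeIso F Y).hom =
      (treeIso F X).hom ≫ F.map ((Paths.of RObj).map e) := by
  cases e <;> simp [LRCE_map_of, RPhi, treeIso, loop, -Groupoid.vertexGroup_one, -Paths.of_map]

def compLoopFunctorIso : LRCE ⋙ loopFunctor F ≅ F :=
  Paths.liftNatIso (treeIso F) (treeIso_naturality F)

end

lemma freeGroupoidLift_map_loop :
    (FreeGroupoid.lift LRCE).map (loop (FreeGroupoid.of RCE)) = Multiplicative.ofAdd (1 : ℤ) := by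
  simp only [loop, Functor.map_comp, Functor.map_inv, FreeGroupoid.lift_map_homMk, LRCE_map_of,
    RPhi, SingleObj.inv_as_inv, SingleObj.comp_as_mul, inv_one, mul_one]

lemma loopFunctor_comp_freeGroupoidLift :
    loopFunctor (FreeGroupoid.of RCE) ⋙ FreeGroupoid.lift LRCE = 𝟭 _ :=
  SingleObj.functor_ext_ofAdd_one (by simpa using freeGroupoidLift_map_loop)

def freeGroupoidEquiv : FreeGroupoid RCE ≌ SingleObj (Multiplicative ℤ) :=
  .mk (FreeGroupoid.lift LRCE) (loopFunctor (FreeGroupoid.of RCE))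
    (FreeGroupoid.liftNatIso _ _ ((compLoopFunctorIso _).symm ≪≫
      Functor.isoWhiskerRight (eqToIso (FreeGroupoid.lift_spec LRCE).symm) _))
    (eqToIso loopFunctor_comp_freeGroupoidLift)

instance isLocalization : LRCE.IsLocalization ⊤ :=
  .of_equivalence_target (FreeGroupoid.of RCE) ⊤ LRCE freeGroupoidEquiv
    (eqToIso (FreeGroupoid.lift_spec LRCE))

end RCE

end

/-- the functor `L : C → Bℤ` sending all objects to `*`, `i₋` to `1 ∈ ℤ`
and `i₊, j₊, j₋` to `0 ∈ ℤ` exhibits `Bℤ` as the localization of the relative Cauchy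
evolution category `C` at the set of all of its morphisms. -/
theorem RCE_localization :
    LRCE.map (Quiver.Hom.toPath RHom.im) = Multiplicative.ofAdd 1 ∧
    LRCE.map (Quiver.Hom.toPath RHom.ip) = Multiplicative.ofAdd 0 ∧
    LRCE.map (Quiver.Hom.toPath RHom.jp) = Multiplicative.ofAdd 0 ∧
    LRCE.map (Quiver.Hom.toPath RHom.jm) = Multiplicative.ofAdd 0 ∧
    IsLocalizationUP LRCE ⊤ :=
  ⟨RCE.LRCE_map_of _, RCE.LRCE_map_of _, RCE.LRCE_map_of _, RCE.LRCE_map_of _,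
    Functor.IsLocalization.isLocalizationUP LRCE ⊤⟩
end
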